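/- The Laplace mechanism is ε-differentially private: if φ : 𝒳 → ℝ is a query with L1-sensitivity Δφ = sup over neighbouring datasets x, x' of |φ(x) − φ(x')|, then the randomized algorithm that outputs φ(x) + Δφ·V, where V ~ Laplace(1/ε), satisfies: for all neighbouring datasets x, x' and every measurable S ⊆ ℝ, P[φ(x) + Δφ·V ∈ S] ≤ e^ε · P[φ(x') + Δφ·V ∈ S]. -/
import Mathlib

open MeasureTheory Real
open scoped ENNReal

noncomputable def laplaceMeasure (b : ℝ) : Measure ℝ :=
  MeasureTheory.volume.withDensity
    (fun v => ENNReal.ofReal ((1 / (2 * b)) * Real.exp (-|v| / b)))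

/-- The Laplace mechanism is ε-differentially private. -/
theorem laplace_mechanism_dp {𝒳 : Type*} (Neighbour : 𝒳 → 𝒳 → Prop)
    (φ : 𝒳 → ℝ) (Δφ : ℝ) (ε : ℝ) (hε : 0 < ε) (hΔpos : 0 < Δφ)
    (hΔ : IsLUB {d : ℝ | ∃ x x', Neighbour x x' ∧ d = |φ x - φ x'|} Δφ) :
    ∀ x x' : 𝒳, Neighbour x x' → ∀ S : Set ℝ, MeasurableSet S →
      laplaceMeasure (1 / ε) {v : ℝ | φ x + Δφ * v ∈ S} ≤
        ENNReal.ofReal (Real.exp ε) * laplaceMeasure (1 / ε) {v : ℝ | φ x' + Δφ * v ∈ S} := by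
  intro x x' hnb S hS
  set b : ℝ := 1 / ε with hb
  have hbpos : 0 < b := by positivity
  set g : ℝ → ℝ≥0∞ := fun v => ENNReal.ofReal ((1 / (2 * b)) * Real.exp (-|v| / b)) with hg
  set c : ℝ := (φ x - φ x') / Δφ with hc
  set A : Set ℝ := {v : ℝ | φ x + Δφ * v ∈ S} with hAdef
  set A' : Set ℝ := {v : ℝ | φ x' + Δφ * v ∈ S} with hA'def
  have hd : |φ x - φ x'| ≤ Δφ := hΔ.1 ⟨x, x', hnb, rfl⟩
  have hcle : |c| ≤ 1 := by
    rw [hc, abs_div, abs_of_pos hΔpos]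
    exact div_le_one_of_le₀ hd hΔpos.le
  have hA : MeasurableSet A := hS.preimage (by fun_prop)
  have hA' : MeasurableSet A' := hS.preimage (by fun_prop)
  have hdiv : ∀ t : ℝ, t / b = t * ε := fun t => by rw [hb]; field_simp
  have hpt : ∀ v : ℝ, g v ≤ ENNReal.ofReal (Real.exp ε) * g (v + c) := by
    intro v
    rw [hg]
    simp only
    rw [← ENNReal.ofReal_mul (exp_nonneg ε)]
    apply ENNReal.ofReal_le_ofReal
    rw [mul_left_comm]
    apply mul_le_mul_of_nonneg_left _ (by positivity)
    rw [← Real.exp_add, hdiv, hdiv]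
    apply Real.exp_le_exp.2
    have habs : |v + c| ≤ |v| + 1 := (abs_add_le _ _).trans (by linarith)
    nlinarith [abs_nonneg v, abs_nonneg (v + c)]
  have hshift : ∀ v : ℝ, v ∈ A ↔ v + c ∈ A' := by
    intro v
    have : φ x' + Δφ * (v + c) = φ x + Δφ * v := by
      rw [hc]; field_simp; ring
    simp [hAdef, hA'def, this]
  rw [laplaceMeasure, withDensity_apply _ hA, withDensity_apply _ hA']
  calc ∫⁻ v in A, g v ∂volume
      ≤ ∫⁻ v in A, ENNReal.ofReal (Real.exp ε) * g (v + c) ∂volume :=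
        setLIntegral_mono' hA fun v _ => hpt v
    _ = ENNReal.ofReal (Real.exp ε) * ∫⁻ v in A, g (v + c) ∂volume :=
        lintegral_const_mul' _ _ ENNReal.ofReal_ne_top
    _ = ENNReal.ofReal (Real.exp ε) * ∫⁻ v in A', g v ∂volume := by
        congr 1
        rw [← lintegral_indicator hA, ← lintegral_indicator hA']
        have : ∀ v : ℝ, A.indicator (fun u => g (u + c)) v = A'.indicator g (v + c) := by
          intro v
          by_cases hv : v ∈ A
          · rw [Set.indicator_of_mem hv, Set.indicator_of_mem ((hshift v).1 hv)]
          · rw [Set.indicator_of_notMem hv,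
              Set.indicator_of_notMem (fun h => hv ((hshift v).2 h))]
        simp_rw [this]
        exact lintegral_add_right_eq_self (A'.indicator g) c
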